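/- Define Ψ(α) = [ (1+α)·( (5−α)·arccot(√α) + √α·ln((1+α)/4) ) − (π/2)·(5 − 4√α + α)·(1 − 2√α − α) ] / [ (√α/(1+α))·(25 − 6α + α²) ] for α > 0, where arccot(t) = π/2 − arctan(t). Then the exact half-duplex baseline-SISO sum spectral efficiency integral satisfies ∫₀^∞ 4 / ((1 + s²)·(s + arccot(s))) ds ≥ 2·Ψ(8/π − 1); that is, the paper's bounded closed-form expression 2 log₂(e)·Ψ(8/π − 1) (≈ 2.72 nat/s/Hz) bounds the exact HD SE over two time slots, log₂(e)·∫₀^∞ 4/((1+s²)(s+arccot s)) ds (≈ 3 nat/s/Hz), from below. -/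

import Mathlib

/-! Both sides are separated by `14 / 5`.

The integrand `f` is decreasing on `[0, ∞)` because `s - arctan s` is increasing. On `[0, 1]` it
therefore dominates its right Riemann sum with step `1 / 8`, which is evaluated through
`arctan s ≥ s - s ^ 3 / 3` and `π < 3.15`; on `[1, ∞)` the bound `arccot s ≤ 1 / s` gives
`f s ≥ 4 s / (1 + s ^ 2) ^ 2`, whose integral is `1`. Hence `∫ f ≥ 9 / 5 + 1`.

For `Ψ`, put `s = √(8 / π - 1)`, so that `π = 8 / (1 + s ^ 2)` and `(1 + α) / 4 = 2 / π`.
Bounding `arccot s = π / 4 - arctan ((s - 1) / (s + 1))` by the same cubic bound and the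
logarithm by `log x ≤ x - 1` turns `Ψ` into a rational function of `s ∈ [1.24, 1.25]`, which is
below `7 / 5`.
-/

open MeasureTheory Real

/-- The function Ψ of the paper (eq. SE_SC_APPROX_FUNC), with
arccot t = π/2 − arctan t. -/
noncomputable def Psi (α : ℝ) : ℝ :=
  ((1 + α) * ((5 - α) * (π / 2 - Real.arctan (Real.sqrt α)) +
      Real.sqrt α * Real.log ((1 + α) / 4)) -
    (π / 2) * (5 - 4 * Real.sqrt α + α) * (1 - 2 * Real.sqrt α - α)) /
    ((Real.sqrt α / (1 + α)) * (25 - 6 * α + α ^ 2))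

open Set Filter Topology Finset

namespace Real

theorem monotone_id_sub_arctan : Monotone fun x : ℝ => x - arctan x := by
  have hderiv (x : ℝ) : HasDerivAt (fun x : ℝ => x - arctan x) (x ^ 2 / (1 + x ^ 2)) x := by
    refine ((hasDerivAt_id' x).fun_sub (hasDerivAt_arctan x)).congr_deriv ?_
    field_simp
    ring
  exact monotone_of_deriv_nonneg (fun x => (hderiv x).differentiableAt)
    fun x => (hderiv x).deriv ▸ by positivity

theorem monotone_arctan_sub_cubic : Monotone fun x : ℝ => arctan x - (x - x ^ 3 / 3) := by
  have hderiv (x : ℝ) : HasDerivAt (fun x : ℝ => arctan x - (x - x ^ 3 / 3))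
      (x ^ 4 / (1 + x ^ 2)) x := by
    refine ((hasDerivAt_arctan x).fun_sub
      ((hasDerivAt_id' x).fun_sub ((hasDerivAt_pow 3 x).div_const 3))).congr_deriv ?_
    field_simp
    ring
  exact monotone_of_deriv_nonneg (fun x => (hderiv x).differentiableAt)
    fun x => (hderiv x).deriv ▸ by positivity

theorem arctan_le_self {x : ℝ} (hx : 0 ≤ x) : arctan x ≤ x := by
  simpa using monotone_id_sub_arctan hx

theorem sub_pow_three_div_three_le_arctan {x : ℝ} (hx : 0 ≤ x) :
    x - x ^ 3 / 3 ≤ arctan x := by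
  simpa using monotone_arctan_sub_cubic hx

theorem pi_div_two_sub_arctan_le_inv {x : ℝ} (hx : 0 < x) : π / 2 - arctan x ≤ x⁻¹ :=
  arctan_inv_of_pos hx ▸ arctan_le_self (inv_nonneg.2 hx.le)

theorem arctan_eq_pi_div_four_add {x : ℝ} (hx : -1 < x) :
    arctan x = π / 4 + arctan ((x - 1) / (x + 1)) := by
  have hx1 : 0 < x + 1 := by linarith
  have hlt : (x - 1) / (x + 1) * 1 < 1 := by rw [mul_one, div_lt_one hx1]; linarith
  rw [← arctan_one, add_comm, arctan_add hlt]
  congr 1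
  field_simp
  ring

theorem pi_div_two_le_add_pi_div_two_sub_arctan {x : ℝ} (hx : 0 ≤ x) :
    π / 2 ≤ x + (π / 2 - arctan x) := by
  linarith [arctan_le_self hx]

end Real

theorem AntitoneOn.mul_sum_le_integral {f : ℝ → ℝ} {x₀ h : ℝ} {n : ℕ} (hh : 0 < h)
    (hf : AntitoneOn f (Icc x₀ (x₀ + n * h))) :
    h * ∑ i ∈ range n, f (x₀ + (i + 1) * h) ≤ ∫ x in x₀..x₀ + n * h, f x := by
  have hg : AntitoneOn (fun t => f (x₀ + h * t)) (Icc 0 (0 + n)) := by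
    intro s hs t ht hst
    refine hf ⟨?_, ?_⟩ ⟨?_, ?_⟩ (by gcongr) <;> nlinarith [hs.1, hs.2, ht.1, ht.2]
  have hsum := hg.sum_le_integral
  rw [intervalIntegral.integral_comp_add_mul _ hh.ne', smul_eq_mul] at hsum
  simp only [zero_add, mul_zero, add_zero, Nat.cast_add, Nat.cast_one] at hsum
  rw [le_inv_mul_iff₀ hh] at hsum
  simpa only [mul_comm _ h] using hsum

theorem hasDerivAt_neg_two_div_one_add_sq (x : ℝ) :
    HasDerivAt (fun x : ℝ => -2 / (1 + x ^ 2)) (4 * x / (1 + x ^ 2) ^ 2) x := by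
  refine ((hasDerivAt_const x (-2 : ℝ)).fun_div
    ((hasDerivAt_pow 2 x).const_add 1) (by positivity)).congr_deriv ?_
  ring

theorem tendsto_neg_two_div_one_add_sq : Tendsto (fun x : ℝ => -2 / (1 + x ^ 2)) atTop (𝓝 0) :=
  tendsto_const_nhds.div_atTop
    (tendsto_atTop_add_const_left _ 1 (tendsto_pow_atTop two_ne_zero))

theorem four_mul_div_one_add_sq_sq_nonneg {a x : ℝ} (ha : 0 ≤ a) (hx : x ∈ Ioi a) :
    0 ≤ 4 * x / (1 + x ^ 2) ^ 2 := by
  have : 0 ≤ x := ha.trans hx.out.le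
  positivity

theorem integrableOn_Ioi_four_mul_div_one_add_sq_sq {a : ℝ} (ha : 0 ≤ a) :
    IntegrableOn (fun x : ℝ => 4 * x / (1 + x ^ 2) ^ 2) (Ioi a) :=
  integrableOn_Ioi_deriv_of_nonneg' (fun x _ => hasDerivAt_neg_two_div_one_add_sq x)
    (fun _ => four_mul_div_one_add_sq_sq_nonneg ha) tendsto_neg_two_div_one_add_sq

theorem integral_Ioi_four_mul_div_one_add_sq_sq {a : ℝ} (ha : 0 ≤ a) :
    ∫ x in Ioi a, 4 * x / (1 + x ^ 2) ^ 2 = 2 / (1 + a ^ 2) := by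
  rw [integral_Ioi_of_hasDerivAt_of_nonneg' (fun x _ => hasDerivAt_neg_two_div_one_add_sq x)
    (fun _ => four_mul_div_one_add_sq_sq_nonneg ha) tendsto_neg_two_div_one_add_sq]
  ring

noncomputable def hdIntegrand (s : ℝ) : ℝ := 4 / ((1 + s ^ 2) * (s + (π / 2 - arctan s)))

theorem hdIntegrand_antitoneOn : AntitoneOn hdIntegrand (Ici 0) := by
  intro x hx y _ hxy
  have hx' : 0 < x + (π / 2 - arctan x) :=
    pi_div_two_pos.trans_le (pi_div_two_le_add_pi_div_two_sub_arctan hx)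
  have harctan : x - arctan x ≤ y - arctan y := monotone_id_sub_arctan hxy
  unfold hdIntegrand
  gcongr 4 / ((1 + ?_) * ?_)
  · exact pow_le_pow_left₀ hx hxy 2
  · linarith

theorem hdIntegrand_nonneg {x : ℝ} (hx : 0 ≤ x) : 0 ≤ hdIntegrand x := by
  have := pi_div_two_le_add_pi_div_two_sub_arctan hx
  exact div_nonneg zero_le_four (mul_nonneg (by positivity) (by linarith [pi_pos]))

theorem integrableOn_hdIntegrand : IntegrableOn hdIntegrand (Ioi 0) := by
  refine ((integrable_inv_one_add_sq.const_mul (8 / π)).integrableOn).mono' ?_ ?_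
  · unfold hdIntegrand
    exact (by fun_prop : Measurable _).aestronglyMeasurable
  · refine (ae_restrict_iff' measurableSet_Ioi).2 (Eventually.of_forall fun x hx => ?_)
    rw [norm_of_nonneg (hdIntegrand_nonneg (le_of_lt hx)), hdIntegrand]
    calc 4 / ((1 + x ^ 2) * (x + (π / 2 - arctan x))) ≤ 4 / ((1 + x ^ 2) * (π / 2)) := by
          gcongr
          exact pi_div_two_le_add_pi_div_two_sub_arctan (le_of_lt hx)
      _ = 8 / π * (1 + x ^ 2)⁻¹ := by field_simp; ring

theorem four_div_le_hdIntegrand {x : ℝ} (hx : 0 ≤ x) :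
    4 / ((1 + x ^ 2) * (63 / 40 + x ^ 3 / 3)) ≤ hdIntegrand x := by
  have hpos := pi_div_two_pos.trans_le (pi_div_two_le_add_pi_div_two_sub_arctan hx)
  have hpi : π < 63 / 20 := pi_lt_d2.trans_eq (by norm_num)
  unfold hdIntegrand
  gcongr 4 / (_ * ?_)
  linarith [sub_pow_three_div_three_le_arctan hx]

theorem four_mul_div_sq_le_hdIntegrand {x : ℝ} (hx : 0 < x) :
    4 * x / (1 + x ^ 2) ^ 2 ≤ hdIntegrand x := by
  have hpos := pi_div_two_pos.trans_le (pi_div_two_le_add_pi_div_two_sub_arctan hx.le)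
  calc 4 * x / (1 + x ^ 2) ^ 2 = 4 / ((1 + x ^ 2) * (x + x⁻¹)) := by field_simp; ring
    _ ≤ hdIntegrand x := by
      unfold hdIntegrand
      gcongr 4 / (_ * (x + ?_))
      exact pi_div_two_sub_arctan_le_inv hx

theorem one_le_integral_Ioi_one_hdIntegrand : 1 ≤ ∫ x in Ioi 1, hdIntegrand x :=
  calc (1 : ℝ) = ∫ x in Ioi 1, 4 * x / (1 + x ^ 2) ^ 2 := by
        rw [integral_Ioi_four_mul_div_one_add_sq_sq zero_le_one]; norm_num
    _ ≤ ∫ x in Ioi 1, hdIntegrand x :=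
      setIntegral_mono_on (integrableOn_Ioi_four_mul_div_one_add_sq_sq zero_le_one)
        (integrableOn_hdIntegrand.mono_set (Ioi_subset_Ioi zero_le_one)) measurableSet_Ioi
        fun x hx => four_mul_div_sq_le_hdIntegrand (zero_lt_one.trans hx)

theorem nine_fifths_le_integral_zero_one_hdIntegrand :
    9 / 5 ≤ ∫ x in (0 : ℝ)..1, hdIntegrand x := by
  have hriemann := (hdIntegrand_antitoneOn.mono Icc_subset_Ici_self).mul_sum_le_integral
    (x₀ := 0) (h := 1 / 8) (n := 8) (by norm_num)
  norm_num only [Nat.cast_ofNat, zero_add] at hriemann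
  calc (9 / 5 : ℝ)
      ≤ 1 / 8 * ∑ i ∈ range 8, 4 / ((1 + (((i : ℝ) + 1) * (1 / 8)) ^ 2) *
          (63 / 40 + (((i : ℝ) + 1) * (1 / 8)) ^ 3 / 3)) := by
        norm_num [Finset.sum_range_succ]
    _ ≤ 1 / 8 * ∑ i ∈ range 8, hdIntegrand (((i : ℝ) + 1) * (1 / 8)) := by
        gcongr with i
        exact four_div_le_hdIntegrand (by positivity)
    _ ≤ ∫ x in (0 : ℝ)..1, hdIntegrand x := hriemann

theorem fourteen_fifths_le_integral_hdIntegrand : 14 / 5 ≤ ∫ x in Ioi 0, hdIntegrand x := by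
  rw [← intervalIntegral.integral_interval_add_Ioi integrableOn_hdIntegrand
    (integrableOn_hdIntegrand.mono_set (Ioi_subset_Ioi zero_le_one))]
  linarith [nine_fifths_le_integral_zero_one_hdIntegrand, one_le_integral_Ioi_one_hdIntegrand]

theorem Psi_le_of_arccot_le_of_log_le {a C ℓ : ℝ} (ha : 0 ≤ a) (ha5 : a ≤ 5)
    (hC : π / 2 - arctan √a ≤ C) (hℓ : log ((1 + a) / 4) ≤ ℓ) :
    Psi a ≤ ((1 + a) * ((5 - a) * C + √a * ℓ) -
        (π / 2) * (5 - 4 * √a + a) * (1 - 2 * √a - a)) /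
      ((√a / (1 + a)) * (25 - 6 * a + a ^ 2)) := by
  have : 0 ≤ 25 - 6 * a + a ^ 2 := by nlinarith [sq_nonneg (a - 3)]
  unfold Psi
  gcongr

theorem psi_rational_bound_le_seven_fifths {p s : ℝ} (hp : p * (1 + s ^ 2) = 8)
    (hs₁ : 31 / 25 ≤ s) (hs₂ : s ≤ 5 / 4) :
    ((1 + s ^ 2) * ((5 - s ^ 2) * (p / 4 - (s - 1) / (s + 1) + ((s - 1) / (s + 1)) ^ 3 / 3) +
      s * ((1 + s ^ 2) / 4 - 1)) - (p / 2) * (5 - 4 * s + s ^ 2) * (1 - 2 * s - s ^ 2)) /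
      ((s / (1 + s ^ 2)) * (25 - 6 * s ^ 2 + (s ^ 2) ^ 2)) ≤ 7 / 5 := by
  obtain rfl : p = 8 / (1 + s ^ 2) := eq_div_of_mul_eq (by positivity) hp
  have hs : 0 < s := by linarith
  have hq : 0 < 25 - 6 * s ^ 2 + (s ^ 2) ^ 2 := by nlinarith
  rw [div_le_iff₀ (by positivity)]
  field_simp
  nlinarith [mul_nonneg (sub_nonneg.2 hs₁) (sub_nonneg.2 hs₂), mul_pos hs hs, pow_pos hs 3,
    pow_pos hs 4, pow_pos hs 5, pow_pos hs 6, pow_pos hs 7]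

theorem Psi_le_seven_fifths : Psi (8 / π - 1) ≤ 7 / 5 := by
  have hpi₁ : 157 / 50 < π := pi_gt_d2.trans_eq' (by norm_num)
  have hpi₂ : π < 63 / 20 := pi_lt_d2.trans_eq (by norm_num)
  set s := √(8 / π - 1)
  have hsq : s ^ 2 = 8 / π - 1 :=
    sq_sqrt (by rw [sub_nonneg, le_div_iff₀ pi_pos]; linarith)
  have hp : π * (1 + s ^ 2) = 8 := by rw [hsq]; field_simp; ring
  have hs₀ : 0 ≤ s := sqrt_nonneg _
  have hs₁ : 31 / 25 ≤ s := by nlinarith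
  have hs₂ : s ≤ 5 / 4 := by nlinarith
  have harccot : π / 2 - arctan √(s ^ 2) ≤
      π / 4 - (s - 1) / (s + 1) + ((s - 1) / (s + 1)) ^ 3 / 3 := by
    rw [sqrt_sq hs₀, arctan_eq_pi_div_four_add (by linarith)]
    linarith [sub_pow_three_div_three_le_arctan (x := (s - 1) / (s + 1))
      (div_nonneg (by linarith) (by linarith))]
  have hlog : log ((1 + s ^ 2) / 4) ≤ (1 + s ^ 2) / 4 - 1 := log_le_sub_one_of_pos (by positivity)
  rw [← hsq]
  refine (Psi_le_of_arccot_le_of_log_le (sq_nonneg s) (by nlinarith) harccot hlog).trans ?_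
  rw [sqrt_sq hs₀]
  exact psi_rational_bound_le_seven_fifths hp hs₁ hs₂

/-- The exact HD baseline-SISO sum SE integral (eq. HD_SE_SC_EXACT) is bounded
below by the closed-form bound 2Ψ(8/π − 1) of Lemma 6 / Remark 9. -/
theorem hd_exact_ge_bound :
    ∫ s in Set.Ioi (0 : ℝ),
        4 / ((1 + s ^ 2) * (s + (π / 2 - Real.arctan s))) ≥
      2 * Psi (8 / π - 1) :=
  calc 2 * Psi (8 / π - 1) ≤ 2 * (7 / 5) := by gcongr; exact Psi_le_seven_fifths
    _ = 14 / 5 := by norm_num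
    _ ≤ ∫ s in Ioi 0, hdIntegrand s := fourteen_fifths_le_integral_hdIntegrand
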